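/- Let n be a natural number, τ, θ ∈ ℂ, λ ∈ ℂ with λ ≠ 0, and let q, p : ℝ → Matrix (Fin n) (Fin n) ℂ be differentiable functions satisfying, for all t, q'(t) = p(t) and p'(t) = 2·(q t)³ + τ·q(t) + θ·1. Define the 2n×2n block matrices L(t) = fromBlocks (i·((λ²/2 + τ/2)·1 + (q t)²)) (λ·q t − i·p t − (θ/λ)·1) (λ·q t + i·p t − (θ/λ)·1) (−i·((λ²/2 + τ/2)·1 + (q t)²)) and M(t) = fromBlocks ((i·λ/2)·1) (q t) (q t) (−(i·λ/2)·1), where i is the imaginary unit. Then for all t, L'(t) + L(t)·M(t) − M(t)·L(t) = 0. -/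

import Mathlib

/-- The Lax matrix `L` of the autonomous matrix Painlevé II system. -/
noncomputable def laxLPII (n : ℕ) (τ θ lam : ℂ) (Q P : Matrix (Fin n) (Fin n) ℂ) :
    Matrix (Fin n ⊕ Fin n) (Fin n ⊕ Fin n) ℂ :=
  Matrix.fromBlocks
    (Complex.I • ((lam ^ 2 / 2 + τ / 2) • (1 : Matrix (Fin n) (Fin n) ℂ) + Q ^ 2))
    (lam • Q - Complex.I • P - (θ / lam) • (1 : Matrix (Fin n) (Fin n) ℂ))
    (lam • Q + Complex.I • P - (θ / lam) • (1 : Matrix (Fin n) (Fin n) ℂ))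
    (-(Complex.I • ((lam ^ 2 / 2 + τ / 2) • (1 : Matrix (Fin n) (Fin n) ℂ) + Q ^ 2)))

/-- The matrix `M` of the autonomous matrix Painlevé II Lax pair. -/
noncomputable def laxMPII (n : ℕ) (lam : ℂ) (Q : Matrix (Fin n) (Fin n) ℂ) :
    Matrix (Fin n ⊕ Fin n) (Fin n ⊕ Fin n) ℂ :=
  Matrix.fromBlocks
    ((Complex.I * lam / 2) • (1 : Matrix (Fin n) (Fin n) ℂ)) Q Q
    (-((Complex.I * lam / 2) • (1 : Matrix (Fin n) (Fin n) ℂ)))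

/-! The Lax equation is two computations: differentiating `L` along `(q, p)` with the product
rule, and expanding the commutator `M L - L M` blockwise, where `λ · (θ / λ) = θ` makes the
constant terms of the off-diagonal blocks match `θ • 1` in `p'`. Matrices carry no global norm,
so derivatives of matrix-valued functions are taken entrywise. -/

open Matrix Complex

namespace Matrix

variable {𝕜 : Type*} [NontriviallyNormedField 𝕜] {𝔸 : Type*} {l m n o : Type*}

def HasDerivAtEntrywise [NormedAddCommGroup 𝔸] [NormedSpace 𝕜 𝔸] (F : 𝕜 → Matrix m n 𝔸)
    (F' : Matrix m n 𝔸) (t : 𝕜) : Prop :=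
  ∀ i j, HasDerivAt (fun s => F s i j) (F' i j) t

section AddGroup

variable [NormedAddCommGroup 𝔸] [NormedSpace 𝕜 𝔸] {F G : 𝕜 → Matrix m n 𝔸}
  {F' G' : Matrix m n 𝔸} {t : 𝕜}

theorem hasDerivAtEntrywise_const (A : Matrix m n 𝔸) (t : 𝕜) :
    HasDerivAtEntrywise (fun _ => A) 0 t :=
  fun i j => hasDerivAt_const t (A i j)

theorem HasDerivAtEntrywise.add (hF : HasDerivAtEntrywise F F' t)
    (hG : HasDerivAtEntrywise G G' t) : HasDerivAtEntrywise (fun s => F s + G s) (F' + G') t :=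
  fun i j => (hF i j).add (hG i j)

theorem HasDerivAtEntrywise.sub (hF : HasDerivAtEntrywise F F' t)
    (hG : HasDerivAtEntrywise G G' t) : HasDerivAtEntrywise (fun s => F s - G s) (F' - G') t :=
  fun i j => (hF i j).sub (hG i j)

theorem HasDerivAtEntrywise.neg (hF : HasDerivAtEntrywise F F' t) :
    HasDerivAtEntrywise (fun s => -F s) (-F') t :=
  fun i j => (hF i j).neg

theorem HasDerivAtEntrywise.fromBlocks {A : 𝕜 → Matrix n l 𝔸} {B : 𝕜 → Matrix n m 𝔸}
    {C : 𝕜 → Matrix o l 𝔸} {D : 𝕜 → Matrix o m 𝔸} {A' : Matrix n l 𝔸} {B' : Matrix n m 𝔸}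
    {C' : Matrix o l 𝔸} {D' : Matrix o m 𝔸} (hA : HasDerivAtEntrywise A A' t)
    (hB : HasDerivAtEntrywise B B' t) (hC : HasDerivAtEntrywise C C' t)
    (hD : HasDerivAtEntrywise D D' t) :
    HasDerivAtEntrywise (fun s => Matrix.fromBlocks (A s) (B s) (C s) (D s))
      (Matrix.fromBlocks A' B' C' D') t
  | .inl i, .inl j => hA i j
  | .inl i, .inr j => hB i j
  | .inr i, .inl j => hC i j
  | .inr i, .inr j => hD i j

end AddGroup

section Ring

variable [NormedRing 𝔸] [NormedAlgebra 𝕜 𝔸] {t : 𝕜}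

theorem HasDerivAtEntrywise.const_smul (c : 𝔸) {F : 𝕜 → Matrix m n 𝔸} {F' : Matrix m n 𝔸}
    (hF : HasDerivAtEntrywise F F' t) : HasDerivAtEntrywise (fun s => c • F s) (c • F') t :=
  fun i j => (hF i j).const_mul c

theorem HasDerivAtEntrywise.mul [Fintype m] {F : 𝕜 → Matrix l m 𝔸} {G : 𝕜 → Matrix m n 𝔸}
    {F' : Matrix l m 𝔸} {G' : Matrix m n 𝔸} (hF : HasDerivAtEntrywise F F' t)
    (hG : HasDerivAtEntrywise G G' t) :
    HasDerivAtEntrywise (fun s => F s * G s) (F' * G t + F t * G') t := fun i j => by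
  simpa only [mul_apply, add_apply, ← Finset.sum_add_distrib] using
    HasDerivAt.fun_sum fun k _ => (hF i k).fun_mul (hG k j)

end Ring

end Matrix

theorem hasDerivAtEntrywise_laxLPII {n : ℕ} (τ θ lam : ℂ) {q p : ℝ → Matrix (Fin n) (Fin n) ℂ}
    {Q' P' : Matrix (Fin n) (Fin n) ℂ} {t : ℝ} (hq : HasDerivAtEntrywise q Q' t)
    (hp : HasDerivAtEntrywise p P' t) :
    HasDerivAtEntrywise (fun s => laxLPII n τ θ lam (q s) (p s))
      (fromBlocks (I • (Q' * q t + q t * Q')) (lam • Q' - I • P') (lam • Q' + I • P')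
        (-(I • (Q' * q t + q t * Q')))) t := by
  have hconst := hasDerivAtEntrywise_const (1 : Matrix (Fin n) (Fin n) ℂ) t
  have hA : HasDerivAtEntrywise (fun s => I • ((lam ^ 2 / 2 + τ / 2) • 1 + q s ^ 2))
      (I • (Q' * q t + q t * Q')) t := by
    have h := ((hconst.const_smul (lam ^ 2 / 2 + τ / 2)).add (hq.mul hq)).const_smul I
    rw [smul_zero, zero_add] at h
    simpa only [pow_two] using h
  have hB := ((hq.const_smul lam).sub (hp.const_smul I)).sub (hconst.const_smul (θ / lam))
  have hC := ((hq.const_smul lam).add (hp.const_smul I)).sub (hconst.const_smul (θ / lam))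
  rw [smul_zero, sub_zero] at hB hC
  exact hA.fromBlocks hB hC hA.neg

theorem laxMPII_mul_laxLPII_sub_laxLPII_mul_laxMPII {n : ℕ} (τ θ : ℂ) {lam : ℂ} (hlam : lam ≠ 0)
    (Q P : Matrix (Fin n) (Fin n) ℂ) :
    laxMPII n lam Q * laxLPII n τ θ lam Q P - laxLPII n τ θ lam Q P * laxMPII n lam Q =
      fromBlocks (I • (P * Q + Q * P)) (lam • P - I • ((2 : ℂ) • Q ^ 3 + τ • Q + θ • 1))
        (lam • P + I • ((2 : ℂ) • Q ^ 3 + τ • Q + θ • 1)) (-(I • (P * Q + Q * P))) := by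
  obtain ⟨μ, rfl⟩ : ∃ μ, θ = lam * μ := ⟨θ / lam, (mul_div_cancel₀ θ hlam).symm⟩
  rw [laxMPII, laxLPII, mul_div_cancel_left₀ μ hlam, fromBlocks_multiply, fromBlocks_multiply,
    sub_eq_add_neg, fromBlocks_neg, fromBlocks_add, fromBlocks_inj]
  refine ⟨?_, ?_, ?_, ?_⟩ <;>
  · simp only [Matrix.smul_mul, Matrix.mul_smul, Matrix.mul_add, Matrix.add_mul, Matrix.mul_sub,
      Matrix.sub_mul, Matrix.neg_mul, Matrix.mul_neg, Matrix.mul_one, Matrix.one_mul, smul_add,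
      smul_sub, smul_neg, smul_smul, pow_succ, pow_zero, Matrix.mul_assoc]
    match_scalars <;> grind [I_sq]

/-- Zero-curvature (Lax) representation `L' + L·M − M·L = 0` of the autonomous matrix
Painlevé II system `q' = p`, `p' = 2q³ + τq + θ·1`, valid for every nonzero value of the
spectral parameter `λ`; equivalently `L' = M·L − L·M` entrywise. -/
theorem autonomous_matrix_painleveII_lax (n : ℕ) (τ θ lam : ℂ) (hlam : lam ≠ 0)
    (q p : ℝ → Matrix (Fin n) (Fin n) ℂ)
    (hq : ∀ (t : ℝ) (i j : Fin n), HasDerivAt (fun s => q s i j) (p t i j) t)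
    (hp : ∀ (t : ℝ) (i j : Fin n),
      HasDerivAt (fun s => p s i j)
        (((2 : ℂ) • (q t) ^ 3 + τ • q t + θ • (1 : Matrix (Fin n) (Fin n) ℂ)) i j) t) :
    ∀ (t : ℝ) (a b : Fin n ⊕ Fin n),
      HasDerivAt (fun s => laxLPII n τ θ lam (q s) (p s) a b)
        ((laxMPII n lam (q t) * laxLPII n τ θ lam (q t) (p t)
          - laxLPII n τ θ lam (q t) (p t) * laxMPII n lam (q t)) a b) t := by
  intro t
  rw [laxMPII_mul_laxLPII_sub_laxLPII_mul_laxMPII τ θ hlam]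
  exact hasDerivAtEntrywise_laxLPII τ θ lam (hq t) (hp t)
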